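/- arXiv:1706.00701 — 6 statements merged into one kernel-verified Lean document; each statement's English description precedes it below -/
import Mathlib

section
/- Let K be a complex Hilbert space, let u be a unitary operator on K, let x be a bounded operator on K, and let c ≥ 1 be a real number. If the block operator on the Hilbert space direct sum K ⊕₂ K given by (k₁, k₂) ↦ (u k₁ + k₂, −k₁ + x k₂) (i.e. the 2×2 operator matrix [[u, 1], [−1, x]]) has operator norm at most c·√2, then ‖x − u*‖ ≤ 2·√(c² − 1). -/
open ContinuousLinearMap

/-- The 2×2 operator matrix `[[a, b], [c, d]]` with entries in `B(K)`, viewed as a bounded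
operator on the Hilbert space direct sum `K ⊕₂ K`, sending `(k₁, k₂)` to
`(a k₁ + b k₂, c k₁ + d k₂)`. -/
noncomputable def blockOperator {K : Type*} [NormedAddCommGroup K] [InnerProductSpace ℂ K]
    (a b c d : K →L[ℂ] K) : WithLp 2 (K × K) →L[ℂ] WithLp 2 (K × K) :=
  ((WithLp.prodContinuousLinearEquiv 2 ℂ K K).symm.toContinuousLinearMap.comp
      ((a.coprod b).prod (c.coprod d))).comp
    (WithLp.prodContinuousLinearEquiv 2 ℂ K K).toContinuousLinearMap

/-- If the operator matrix `[[u, 1], [-1, x]]` (with `u` unitary) has norm at most `c√2`,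
then `‖x - u*‖ ≤ 2√(c² - 1)`. -/
theorem norm_sub_adjoint_le_of_blockOperator_norm_le
    {K : Type*} [NormedAddCommGroup K] [InnerProductSpace ℂ K] [CompleteSpace K]
    (u : K →L[ℂ] K) (hu : u ∈ unitary (K →L[ℂ] K)) (x : K →L[ℂ] K)
    (c : ℝ) (hc : 1 ≤ c)
    (h : ‖blockOperator u 1 (-1) x‖ ≤ c * Real.sqrt 2) :
    ‖x - ContinuousLinearMap.adjoint u‖ ≤ 2 * Real.sqrt (c ^ 2 - 1) := by
  have hsq : (0:ℝ) ≤ c ^ 2 - 1 := by nlinarith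
  have hpos : (0:ℝ) ≤ 2 * Real.sqrt (c ^ 2 - 1) := by positivity
  apply ContinuousLinearMap.opNorm_le_bound _ hpos
  intro k
  set v : K := ContinuousLinearMap.adjoint u k with hv
  -- u applied to v is k
  have huv : u v = k := by
    have h1 : u * star u = 1 := hu.2
    have : (u * star u) k = k := by rw [h1]; rfl
    rwa [ContinuousLinearMap.mul_apply, ContinuousLinearMap.star_eq_adjoint] at this
  have hvn : ‖v‖ = ‖k‖ := by
    rw [hv, ← ContinuousLinearMap.star_eq_adjoint]
    exact ContinuousLinearMap.norm_map_of_mem_unitary (Unitary.star_mem hu) k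
  set ξ : WithLp 2 (K × K) := (WithLp.prodContinuousLinearEquiv 2 ℂ K K).symm (v, k) with hξ
  have hξn : ‖ξ‖ ^ 2 = 2 * ‖k‖ ^ 2 := by
    rw [WithLp.prod_norm_sq_eq_of_L2]
    have : (ξ.fst, ξ.snd) = (v, k) := rfl
    simp only [Prod.mk.injEq] at this
    rw [this.1, this.2, hvn]; ring
  have happ : blockOperator u 1 (-1) x ξ
      = (WithLp.prodContinuousLinearEquiv 2 ℂ K K).symm ((2:ℂ) • k, x k - v) := by
    simp only [blockOperator, ContinuousLinearMap.comp_apply,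
      ContinuousLinearEquiv.coe_coe]
    congr 1
    have : (WithLp.prodContinuousLinearEquiv 2 ℂ K K) ξ = (v, k) := by
      rw [hξ]; exact (WithLp.prodContinuousLinearEquiv 2 ℂ K K).apply_symm_apply _
    rw [this]
    simp only [ContinuousLinearMap.prod_apply, ContinuousLinearMap.coprod_apply,
      ContinuousLinearMap.one_apply, ContinuousLinearMap.neg_apply, huv]
    rw [Prod.mk.injEq]
    constructor
    · rw [show ((2:ℂ):ℂ) • k = (2:ℂ) • k from rfl, two_smul]
    · abel
  have hTn : ‖blockOperator u 1 (-1) x ξ‖ ^ 2 = 4 * ‖k‖ ^ 2 + ‖x k - v‖ ^ 2 := by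
    rw [happ]
    rw [WithLp.prod_norm_sq_eq_of_L2]
    have h1 : ((WithLp.prodContinuousLinearEquiv 2 ℂ K K).symm
        ((2:ℂ) • k, x k - v)).fst = (2:ℂ) • k := rfl
    have h2 : ((WithLp.prodContinuousLinearEquiv 2 ℂ K K).symm
        ((2:ℂ) • k, x k - v)).snd = x k - v := rfl
    rw [h1, h2, norm_smul]
    simp
    ring
  have hb : ‖blockOperator u 1 (-1) x ξ‖ ≤ 2 * c * ‖k‖ := by
    calc ‖blockOperator u 1 (-1) x ξ‖ ≤ ‖blockOperator u 1 (-1) x‖ * ‖ξ‖ :=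
          ContinuousLinearMap.le_opNorm _ _
      _ ≤ c * Real.sqrt 2 * ‖ξ‖ := by
          apply mul_le_mul_of_nonneg_right h (norm_nonneg _)
      _ = 2 * c * ‖k‖ := by
          have : ‖ξ‖ = Real.sqrt 2 * ‖k‖ := by
            have := hξn
            nlinarith [norm_nonneg ξ, norm_nonneg k, Real.sq_sqrt (by norm_num : (0:ℝ) ≤ 2),
              Real.sqrt_nonneg 2, mul_nonneg (Real.sqrt_nonneg 2) (norm_nonneg k)]
          rw [this]
          rw [show c * Real.sqrt 2 * (Real.sqrt 2 * ‖k‖)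
            = (Real.sqrt 2 * Real.sqrt 2) * c * ‖k‖ by ring,
            Real.mul_self_sqrt (by norm_num : (0:ℝ) ≤ 2)]
  have key : ‖x k - v‖ ^ 2 ≤ 4 * (c ^ 2 - 1) * ‖k‖ ^ 2 := by
    nlinarith [hTn, hb, norm_nonneg (blockOperator u 1 (-1) x ξ), norm_nonneg k,
      mul_nonneg (mul_nonneg (by norm_num : (0:ℝ) ≤ 2) (by linarith : (0:ℝ) ≤ c)) (norm_nonneg k)]
  have hfin : ‖x k - v‖ ≤ 2 * Real.sqrt (c ^ 2 - 1) * ‖k‖ := by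
    nlinarith [norm_nonneg (x k - v), Real.sq_sqrt hsq, Real.sqrt_nonneg (c ^ 2 - 1),
      norm_nonneg k, mul_nonneg (mul_nonneg (by norm_num : (0:ℝ) ≤ 2)
        (Real.sqrt_nonneg (c ^ 2 - 1))) (norm_nonneg k)]
  simpa [hv] using hfin
end

section
/- Let K be a complex Hilbert space, let u and v be unitary operators on K, let x be a bounded operator on K, and let c ≥ 1 be a real number. If the block operator on the Hilbert space direct sum K ⊕₂ K given by (k₁, k₂) ↦ (u k₁ + x k₂, −k₁ + v k₂) (i.e. the 2×2 operator matrix [[u, x], [−1, v]]) has operator norm at most c·√2, then ‖x − u v‖ ≤ 2·√(c² − 1). -/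
open ContinuousLinearMap

/-- If the operator matrix `[[u, x], [-1, v]]` (with `u, v` unitary) has norm at most `c√2`,
then `‖x - uv‖ ≤ 2√(c² - 1)`. -/
theorem norm_sub_mul_le_of_blockOperator_norm_le
    {K : Type*} [NormedAddCommGroup K] [InnerProductSpace ℂ K] [CompleteSpace K]
    (u v : K →L[ℂ] K) (hu : u ∈ unitary (K →L[ℂ] K)) (hv : v ∈ unitary (K →L[ℂ] K))
    (x : K →L[ℂ] K) (c : ℝ) (hc : 1 ≤ c)
    (h : ‖blockOperator u x (-1) v‖ ≤ c * Real.sqrt 2) :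
    ‖x - u * v‖ ≤ 2 * Real.sqrt (c ^ 2 - 1) := by
  have hb : (0:ℝ) ≤ 2 * Real.sqrt (c ^ 2 - 1) := by positivity
  refine opNorm_le_bound _ hb fun k => ?_
  set T := blockOperator u x (-1) v with hT
  set ξ : WithLp 2 (K × K) := (WithLp.prodContinuousLinearEquiv 2 ℂ K K).symm (-(v k), k)
    with hξ
  have hξf : ξ.fst = -(v k) := rfl
  have hξs : ξ.snd = k := rfl
  have hTξf : (T ξ).fst = (x - u * v) k := by
    simp [hT, blockOperator, hξ, mul_apply]
    abel
  have hTξs : (T ξ).snd = v k + v k := by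
    simp [hT, blockOperator, hξ]
  have hvk : ‖v k‖ = ‖k‖ := norm_map_of_mem_unitary hv k
  have hξnorm : ‖ξ‖ ^ 2 = 2 * ‖k‖ ^ 2 := by
    rw [WithLp.prod_norm_sq_eq_of_L2, hξf, hξs, norm_neg, hvk]; ring
  have hTξnorm : ‖T ξ‖ ^ 2 = ‖(x - u * v) k‖ ^ 2 + 4 * ‖k‖ ^ 2 := by
    rw [WithLp.prod_norm_sq_eq_of_L2, hTξf, hTξs]
    have : ‖v k + v k‖ = 2 * ‖k‖ := by
      rw [← two_smul ℝ, norm_smul, hvk]; simp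
    rw [this]; ring
  have hle : ‖T ξ‖ ≤ c * Real.sqrt 2 * ‖ξ‖ :=
    le_trans (T.le_opNorm ξ) (by gcongr)
  have hle2 : ‖T ξ‖ ^ 2 ≤ (c * Real.sqrt 2) ^ 2 * ‖ξ‖ ^ 2 := by
    rw [← mul_pow]
    exact pow_le_pow_left₀ (norm_nonneg _) hle 2
  have h2 : (c * Real.sqrt 2) ^ 2 = 2 * c ^ 2 := by
    rw [mul_pow, Real.sq_sqrt (by norm_num : (0:ℝ) ≤ 2)]; ring
  have key : ‖(x - u * v) k‖ ^ 2 ≤ (2 * Real.sqrt (c ^ 2 - 1)) ^ 2 * ‖k‖ ^ 2 := by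
    have h1 : (1:ℝ) ≤ c ^ 2 := by nlinarith
    have : (2 * Real.sqrt (c ^ 2 - 1)) ^ 2 = 4 * (c ^ 2 - 1) := by
      rw [mul_pow, Real.sq_sqrt (by nlinarith)]; norm_num
    rw [this]
    nlinarith [hTξnorm ▸ (hξnorm ▸ (h2 ▸ hle2))]
  calc ‖(x - u * v) k‖ = Real.sqrt (‖(x - u * v) k‖ ^ 2) := by
        rw [Real.sqrt_sq (norm_nonneg _)]
    _ ≤ Real.sqrt ((2 * Real.sqrt (c ^ 2 - 1)) ^ 2 * ‖k‖ ^ 2) := Real.sqrt_le_sqrt key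
    _ = 2 * Real.sqrt (c ^ 2 - 1) * ‖k‖ := by
        rw [← mul_pow, Real.sqrt_sq (by positivity)]
end

section
/- Let G be a locally compact Hausdorff topological group with a left Haar measure μ. For g ∈ G let λ_g denote the left translation operator on L²(G, μ), (λ_g f)(t) = f(g⁻¹ t), which is a surjective linear isometry of L²(G, μ). Let g₁, …, gₙ ∈ G be pairwise distinct and c₁, …, cₙ ∈ ℂ. Then the operator norm of Σⱼ cⱼ λ_{gⱼ} on L²(G, μ) is at least (Σⱼ |cⱼ|²)^{1/2}. -/
open MeasureTheory
open scoped Pointwise ENNReal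

/-- Lower bound on the norm of a linear combination of left translation operators on
`L²(G, μ)` for a left Haar measure `μ` on a locally compact group `G`: if `g₁, …, gₙ` are
pairwise distinct then `‖Σⱼ cⱼ λ_{gⱼ}‖ ≥ (Σⱼ |cⱼ|²)^{1/2}`. -/
theorem sqrt_sum_sq_le_norm_sum_translations
    {G : Type*} [Group G] [TopologicalSpace G] [IsTopologicalGroup G] [T2Space G]
    [LocallyCompactSpace G] [MeasurableSpace G] [BorelSpace G]
    (μ : Measure G) [μ.IsHaarMeasure] [μ.Regular]
    (lam : G → (Lp ℂ 2 μ →L[ℂ] Lp ℂ 2 μ))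
    (hlam : ∀ (g : G) (f : Lp ℂ 2 μ), (lam g f : G → ℂ) =ᵐ[μ] fun t => f (g⁻¹ * t))
    (n : ℕ) (g : Fin n → G) (hg : Function.Injective g) (c : Fin n → ℂ) :
    Real.sqrt (∑ j, ‖c j‖ ^ 2) ≤ ‖∑ j, c j • lam (g j)‖ := by
  classical
  -- the finite set of "bad" products
  set F : Set G := (fun p : Fin n × Fin n => (g p.1)⁻¹ * g p.2) '' {p | p.1 ≠ p.2} with hF
  have hFfin : F.Finite := ((Set.finite_univ (α := Fin n × Fin n)).subset
    (Set.subset_univ _)).image _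
  have h1F : (1 : G) ∉ F := by
    rintro ⟨⟨i, j⟩, hij, hone⟩
    exact hij (hg (inv_mul_eq_one.mp hone))
  -- a small open set W with W * W ⊆ Fᶜ
  have hFc : Fᶜ ∈ nhds (1 : G) := hFfin.isClosed.isOpen_compl.mem_nhds h1F
  obtain ⟨W, hWopen, h1W, hWW⟩ := exists_open_nhds_one_mul_subset hFc
  -- a compact neighborhood
  obtain ⟨K, hKcomp, hKnhds⟩ := exists_compact_mem_nhds (1 : G)
  -- the small set V
  set V : Set G := W ∩ W⁻¹ ∩ interior K with hVdef
  have hVopen : IsOpen V := (hWopen.inter hWopen.inv).inter isOpen_interior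
  have h1V : (1 : G) ∈ V :=
    ⟨⟨h1W, by simpa using h1W⟩, mem_interior_iff_mem_nhds.2 hKnhds⟩
  have hVpos : 0 < μ V := hVopen.measure_pos μ ⟨1, h1V⟩
  have hVlt : μ V < ⊤ :=
    lt_of_le_of_lt (measure_mono (Set.inter_subset_right.trans interior_subset))
      hKcomp.measure_lt_top
  have hVne : μ V ≠ ⊤ := hVlt.ne
  -- translates are pairwise disjoint
  have hdisj : ∀ i j : Fin n, i ≠ j → Disjoint (g i • V) (g j • V) := by
    intro i j hij
    rw [Set.disjoint_left]
    rintro t hti htj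
    have h1 : (g i)⁻¹ * t ∈ V := by
      have := Set.mem_smul_set_iff_inv_smul_mem.mp hti
      simpa [smul_eq_mul] using this
    have h2 : (g j)⁻¹ * t ∈ V := by
      have := Set.mem_smul_set_iff_inv_smul_mem.mp htj
      simpa [smul_eq_mul] using this
    have hv : (g i)⁻¹ * t ∈ W := h1.1.1
    have hw : ((g j)⁻¹ * t)⁻¹ ∈ W := Set.mem_inv.mp h2.1.2
    have hmem : ((g i)⁻¹ * t) * ((g j)⁻¹ * t)⁻¹ ∈ W * W :=
      Set.mul_mem_mul hv hw
    have heq : ((g i)⁻¹ * t) * ((g j)⁻¹ * t)⁻¹ = (g i)⁻¹ * g j := by group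
    have hWWF := hWW hmem
    rw [heq] at hWWF
    exact hWWF ⟨(i, j), hij, rfl⟩
  -- the normalizing constant
  set a : ℂ := (((Real.sqrt (μ V).toReal)⁻¹ : ℝ) : ℂ) with ha
  have hsqrt_pos : 0 < Real.sqrt (μ V).toReal :=
    Real.sqrt_pos.mpr (ENNReal.toReal_pos hVpos.ne' hVne)
  -- measurability and measure of translates
  have hmeas : ∀ i : Fin n, MeasurableSet (g i • V) :=
    fun i => (hVopen.smul (g i)).measurableSet
  have hμsmul : ∀ i : Fin n, μ (g i • V) = μ V := fun i => measure_smul (μ := μ) (g i) V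
  have hμsmul_ne : ∀ i : Fin n, μ (g i • V) ≠ ⊤ := fun i => by rw [hμsmul i]; exact hVne
  -- the orthonormal family
  set e : Fin n → Lp ℂ 2 μ :=
    fun i => indicatorConstLp 2 (hmeas i) (hμsmul_ne i) a with he
  have hnorm_e : ∀ i : Fin n, ‖e i‖ = 1 := by
    intro i
    rw [he]
    rw [norm_indicatorConstLp (by norm_num) (by norm_num)]
    rw [measureReal_def, hμsmul i]
    have : (μ V).toReal ^ (1 / (2 : ℝ≥0∞).toReal) = Real.sqrt (μ V).toReal := by
      rw [ENNReal.toReal_ofNat, Real.sqrt_eq_rpow]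
    rw [this, ha]
    simp only [Complex.norm_real, norm_inv, Real.norm_eq_abs,
      abs_of_pos hsqrt_pos]
    exact inv_mul_cancel₀ hsqrt_pos.ne'
  have horth : Orthonormal ℂ e := by
    constructor
    · exact hnorm_e
    · intro i j hij
      rw [he]
      rw [L2.inner_indicatorConstLp_eq_setIntegral_inner]
      have hzero : ∀ᵐ x ∂μ, x ∈ g i • V →
          (inner ℂ a ((indicatorConstLp 2 (hmeas j) (hμsmul_ne j) a : Lp ℂ 2 μ) x) : ℂ) = 0 := by
        filter_upwards [indicatorConstLp_coeFn_notMem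
          (p := 2) (hs := hmeas j) (hμs := hμsmul_ne j) (c := a)] with x hx hxi
        have hxj : x ∉ g j • V := fun hmem => (hdisj i j hij).le_bot ⟨hxi, hmem⟩ |>.elim
        rw [hx hxj, inner_zero_right]
      calc (∫ x in g i • V,
            (inner ℂ a ((indicatorConstLp 2 (hmeas j) (hμsmul_ne j) a : Lp ℂ 2 μ) x) : ℂ) ∂μ)
          = ∫ _x in g i • V, (0 : ℂ) ∂μ := setIntegral_congr_ae (hmeas i) hzero
        _ = 0 := by simp
  -- the test function
  have hmeasV : MeasurableSet V := hVopen.measurableSet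
  set f₀ : Lp ℂ 2 μ := indicatorConstLp 2 hmeasV hVne a with hf₀
  have hnorm_f₀ : ‖f₀‖ = 1 := by
    rw [hf₀, norm_indicatorConstLp (by norm_num) (by norm_num), measureReal_def]
    have : (μ V).toReal ^ (1 / (2 : ℝ≥0∞).toReal) = Real.sqrt (μ V).toReal := by
      rw [ENNReal.toReal_ofNat, Real.sqrt_eq_rpow]
    rw [this, ha]
    simp only [Complex.norm_real, norm_inv, Real.norm_eq_abs, abs_of_pos hsqrt_pos]
    exact inv_mul_cancel₀ hsqrt_pos.ne'
  -- lam (g i) f₀ = e i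
  have hlam_f₀ : ∀ i : Fin n, lam (g i) f₀ = e i := by
    intro i
    refine Lp.ext ?_
    have h1 : (lam (g i) f₀ : G → ℂ) =ᵐ[μ] fun t => f₀ ((g i)⁻¹ * t) := hlam (g i) f₀
    have h2 : (f₀ : G → ℂ) =ᵐ[μ] V.indicator fun _ => a := indicatorConstLp_coeFn
    have hqmp : Measure.QuasiMeasurePreserving (fun t : G => (g i)⁻¹ * t) μ μ :=
      (measurePreserving_mul_left μ (g i)⁻¹).quasiMeasurePreserving
    have h3 : (fun t => f₀ ((g i)⁻¹ * t)) =ᵐ[μ]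
        (fun t => V.indicator (fun _ => a) ((g i)⁻¹ * t)) := hqmp.ae_eq_comp h2
    have h4 : (fun t => V.indicator (fun _ => a) ((g i)⁻¹ * t)) =
        (g i • V).indicator fun _ => a := by
      funext t
      by_cases ht : t ∈ g i • V
      · rw [Set.indicator_of_mem ht]
        have : (g i)⁻¹ * t ∈ V := by
          have := Set.mem_smul_set_iff_inv_smul_mem.mp ht
          simpa [smul_eq_mul] using this
        rw [Set.indicator_of_mem this]
      · rw [Set.indicator_of_notMem ht]
        have : (g i)⁻¹ * t ∉ V := fun hmem => ht (by
          rw [Set.mem_smul_set_iff_inv_smul_mem]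
          simpa [smul_eq_mul] using hmem)
        rw [Set.indicator_of_notMem this]
    have h5 : (e i : G → ℂ) =ᵐ[μ] (g i • V).indicator fun _ => a := indicatorConstLp_coeFn
    calc (lam (g i) f₀ : G → ℂ)
        =ᵐ[μ] fun t => f₀ ((g i)⁻¹ * t) := h1
      _ =ᵐ[μ] (fun t => V.indicator (fun _ => a) ((g i)⁻¹ * t)) := h3
      _ = (g i • V).indicator fun _ => a := h4
      _ =ᵐ[μ] (e i : G → ℂ) := h5.symm
  -- compute the norm of the image
  have himage : (∑ j, c j • lam (g j)) f₀ = ∑ j, c j • e j := by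
    rw [ContinuousLinearMap.sum_apply]
    congr 1
    funext j
    rw [ContinuousLinearMap.smul_apply, hlam_f₀ j]
  have hnormsq : ‖∑ j, c j • e j‖ ^ 2 = ∑ j, ‖c j‖ ^ 2 := by
    have hin := horth.inner_sum c c Finset.univ
    have hself : (inner ℂ (∑ j, c j • e j) (∑ j, c j • e j) : ℂ)
        = ((‖∑ j, c j • e j‖ : ℝ) : ℂ) ^ 2 := inner_self_eq_norm_sq_to_K _
    rw [hself] at hin
    have hconj : ∀ j : Fin n, (starRingEnd ℂ) (c j) * c j = ((‖c j‖ ^ 2 : ℝ) : ℂ) := by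
      intro j
      rw [mul_comm, Complex.mul_conj, Complex.normSq_eq_norm_sq]
    rw [Finset.sum_congr rfl (fun j _ => hconj j)] at hin
    rw [← Complex.ofReal_pow, ← Complex.ofReal_sum] at hin
    exact_mod_cast hin
  -- conclude
  have hle := (∑ j, c j • lam (g j)).le_opNorm f₀
  rw [himage, hnorm_f₀, mul_one] at hle
  have hfinal : ‖∑ j, c j • e j‖ = Real.sqrt (∑ j, ‖c j‖ ^ 2) := by
    rw [← hnormsq]
    exact (Real.sqrt_sq (norm_nonneg _)).symm
  rw [← hfinal]
  exact hle
end

section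
/- Let G be a locally compact Hausdorff topological group with a left Haar measure μ, and for g ∈ G let λ_g denote the left translation operator on L²(G, μ), (λ_g f)(t) = f(g⁻¹ t). Let g₁, g₂, g₃, g₄ ∈ G. If it is not the case that (g₁ = g₃ and g₂ = g₄) or (g₁ = g₄ and g₂ = g₃), then the operator norm of λ_{g₁} + λ_{g₂} − λ_{g₃} − λ_{g₄} on L²(G, μ) is at least √2; and if (g₁ = g₃ and g₂ = g₄) or (g₁ = g₄ and g₂ = g₃), then λ_{g₁} + λ_{g₂} − λ_{g₃} − λ_{g₄} = 0. -/
open MeasureTheory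

set_option linter.unusedSectionVars false
set_option linter.unusedVariables false

open scoped Pointwise ENNReal

section Aux

variable {G : Type*} [Group G] [TopologicalSpace G] [IsTopologicalGroup G] [T2Space G]
    [LocallyCompactSpace G] [MeasurableSpace G] [BorelSpace G]

/-- For any `k`, an open neighborhood `U` of `1` with `U` disjoint from `k • U` when `k ≠ 1`. -/
lemma exists_sep' (k : G) : ∃ U : Set G, IsOpen U ∧ (1 : G) ∈ U ∧
    (k ≠ 1 → Disjoint U (k • U)) := by
  by_cases hk : k = 1
  · exact ⟨Set.univ, isOpen_univ, Set.mem_univ _, fun h => absurd hk h⟩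
  · obtain ⟨A, B, hA, hB, h1A, hkB, hAB⟩ := t2_separation (Ne.symm hk)
    refine ⟨A ∩ (k⁻¹ • B), hA.inter (hB.smul k⁻¹), ⟨h1A, ?_⟩, fun _ => ?_⟩
    · rw [Set.mem_inv_smul_set_iff, smul_eq_mul, mul_one]
      exact hkB
    · refine hAB.mono (Set.inter_subset_left) ?_
      intro x hx
      obtain ⟨y, ⟨-, hy⟩, rfl⟩ := hx
      rwa [Set.mem_inv_smul_set_iff] at hy

/-- A small open neighborhood of `1` with positive finite Haar measure whose translates
by the given elements are disjoint from itself. -/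
lemma exists_good_V (μ : Measure G) [μ.IsHaarMeasure] (s : Finset G) :
    ∃ V : Set G, IsOpen V ∧ 0 < μ V ∧ μ V ≠ ∞ ∧
      ∀ k ∈ s, k ≠ 1 → Disjoint V (k • V) := by
  obtain ⟨K, hK, hK1⟩ := exists_compact_mem_nhds (1 : G)
  choose U hUopen hU1 hUdisj using fun k : G => exists_sep' k
  refine ⟨interior K ∩ ⋂ k ∈ (s : Set G), U k, ?_, ?_, ?_, ?_⟩
  · exact isOpen_interior.inter (s.finite_toSet.isOpen_biInter fun k _ => hUopen k)
  · refine (isOpen_interior.inter (s.finite_toSet.isOpen_biInter fun k _ => hUopen k)).measure_pos μ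
      ⟨1, mem_interior_iff_mem_nhds.2 hK1, Set.mem_iInter₂.2 fun k _ => hU1 k⟩
  · exact ne_of_lt (lt_of_le_of_lt (measure_mono ((Set.inter_subset_left).trans interior_subset))
      hK.measure_lt_top)
  · intro k hk hk1
    refine (hUdisj k hk1).mono ?_ ?_
    · exact (Set.inter_subset_right).trans (Set.biInter_subset_of_mem (by exact_mod_cast hk))
    · exact Set.smul_set_mono ((Set.inter_subset_right).trans
        (Set.biInter_subset_of_mem (by exact_mod_cast hk)))

variable (μ : Measure G) [μ.IsHaarMeasure] [μ.Regular]

lemma measure_smul_set (g : G) (V : Set G) : μ (g • V) = μ V :=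
  MeasureTheory.measure_smul (μ := μ) g V

lemma lam_indicator_eq
    (lam : G → (Lp ℂ 2 μ →L[ℂ] Lp ℂ 2 μ))
    (hlam : ∀ (g : G) (f : Lp ℂ 2 μ), (lam g f : G → ℂ) =ᵐ[μ] fun t => f (g⁻¹ * t))
    (g : G) {V : Set G} (hV : MeasurableSet V) (hμV : μ V ≠ ∞) :
    lam g (indicatorConstLp 2 hV hμV (1 : ℂ)) =
      indicatorConstLp 2 (hV.const_smul g) ((measure_smul_set μ g V).trans_ne hμV) (1 : ℂ) := by
  apply Lp.ext
  have h1 := hlam g (indicatorConstLp 2 hV hμV (1 : ℂ))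
  have h2 : ⇑(indicatorConstLp 2 hV hμV (1 : ℂ)) =ᵐ[μ] V.indicator fun _ => (1 : ℂ) :=
    indicatorConstLp_coeFn
  have h3 : (fun t => (indicatorConstLp 2 hV hμV (1 : ℂ)) (g⁻¹ * t)) =ᵐ[μ]
      fun t => V.indicator (fun _ => (1 : ℂ)) (g⁻¹ * t) :=
    (measurePreserving_mul_left μ g⁻¹).quasiMeasurePreserving.ae_eq_comp h2
  have h4 : (fun t => V.indicator (fun _ => (1 : ℂ)) (g⁻¹ * t)) =
      (g • V).indicator fun _ => (1 : ℂ) := by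
    funext t
    by_cases ht : t ∈ g • V
    · rw [Set.indicator_of_mem ht, Set.indicator_of_mem]
      rwa [Set.mem_smul_set_iff_inv_smul_mem, smul_eq_mul] at ht
    · rw [Set.indicator_of_notMem ht, Set.indicator_of_notMem]
      rwa [Set.mem_smul_set_iff_inv_smul_mem, smul_eq_mul] at ht
  exact (h1.trans (h3.trans (by rw [h4]))).trans indicatorConstLp_coeFn.symm

lemma inner_indicator_indicator {A B : Set G} (hA : MeasurableSet A) (hB : MeasurableSet B)
    (hμA : μ A ≠ ∞) (hμB : μ B ≠ ∞) :
    (inner ℂ (indicatorConstLp 2 hA hμA (1 : ℂ)) (indicatorConstLp 2 hB hμB (1 : ℂ)) : ℂ) =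
      ((μ (B ∩ A)).toReal : ℂ) := by
  rw [L2.inner_indicatorConstLp_one hA hμA, setIntegral_indicatorConstLp hA hB hμB]
  simp [Measure.real]

end Aux

section Main

variable {G : Type*} [Group G] [TopologicalSpace G] [IsTopologicalGroup G] [T2Space G]
    [LocallyCompactSpace G] [MeasurableSpace G] [BorelSpace G]
    (μ : Measure G) [μ.IsHaarMeasure] [μ.Regular]

set_option linter.unusedSectionVars false
set_option linter.unusedVariables false

lemma norm_sq_indicator {A : Set G} (hA : MeasurableSet A) (hμA : μ A ≠ ∞) :
    ‖indicatorConstLp 2 hA hμA (1 : ℂ)‖ ^ 2 = (μ A).toReal := by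
  rw [← inner_self_eq_norm_sq (𝕜 := ℂ), inner_indicator_indicator μ hA hA hμA hμA,
    Set.inter_self]
  simp

lemma re_inner_indicator {A B : Set G} (hA : MeasurableSet A) (hB : MeasurableSet B)
    (hμA : μ A ≠ ∞) (hμB : μ B ≠ ∞) :
    RCLike.re (inner (𝕜 := ℂ) (indicatorConstLp 2 hA hμA (1 : ℂ))
      (indicatorConstLp 2 hB hμB (1 : ℂ))) = (μ (B ∩ A)).toReal := by
  rw [inner_indicator_indicator μ hA hB hμA hμB]
  simp

lemma re_inner_indicator_nonneg {A B : Set G} (hA : MeasurableSet A) (hB : MeasurableSet B)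
    (hμA : μ A ≠ ∞) (hμB : μ B ≠ ∞) :
    0 ≤ RCLike.re (inner (𝕜 := ℂ) (indicatorConstLp 2 hA hμA (1 : ℂ))
      (indicatorConstLp 2 hB hμB (1 : ℂ))) := by
  rw [re_inner_indicator μ hA hB hμA hμB]; exact ENNReal.toReal_nonneg

lemma re_inner_indicator_zero {A B : Set G} (hA : MeasurableSet A) (hB : MeasurableSet B)
    (hμA : μ A ≠ ∞) (hμB : μ B ≠ ∞) (h : Disjoint A B) :
    RCLike.re (inner (𝕜 := ℂ) (indicatorConstLp 2 hA hμA (1 : ℂ))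
      (indicatorConstLp 2 hB hμB (1 : ℂ))) = 0 := by
  rw [re_inner_indicator μ hA hB hμA hμB, Set.disjoint_iff_inter_eq_empty.1 h.symm]
  simp

/-- From a single unit-scale witness, a lower bound on the operator norm. -/
lemma opNorm_ge_sqrt_two {E : Type*} [NormedAddCommGroup E] [NormedSpace ℂ E]
    (T : E →L[ℂ] E) (f : E) (m : ℝ) (hm : 0 < m) (hf : ‖f‖ ^ 2 = m)
    (hTf : 2 * m ≤ ‖T f‖ ^ 2) : Real.sqrt 2 ≤ ‖T‖ := by
  have hfpos : 0 < ‖f‖ := by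
    rcases (norm_nonneg f).lt_or_eq with h | h
    · exact h
    · exfalso; rw [← h] at hf; simp at hf; nlinarith
  have h2 : (Real.sqrt 2 * ‖f‖) ^ 2 ≤ ‖T f‖ ^ 2 := by
    rw [mul_pow, Real.sq_sqrt (by norm_num : (0:ℝ) ≤ 2)]
    nlinarith
  have h1 : Real.sqrt 2 * ‖f‖ ≤ ‖T f‖ := by
    have := Real.sqrt_le_sqrt h2
    rwa [Real.sqrt_sq (by positivity), Real.sqrt_sq (norm_nonneg _)] at this
  have h3 : Real.sqrt 2 * ‖f‖ ≤ ‖T‖ * ‖f‖ := h1.trans (T.le_opNorm f)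
  exact le_of_mul_le_mul_right (by linarith) hfpos

end Main

section Main2

variable {G : Type*} [Group G] [TopologicalSpace G] [IsTopologicalGroup G] [T2Space G]
    [LocallyCompactSpace G] [MeasurableSpace G] [BorelSpace G]
    (μ : Measure G) [μ.IsHaarMeasure] [μ.Regular]

set_option linter.unusedSectionVars false

lemma disjoint_translates {V : Set G} (x y : G) (h : Disjoint V ((x⁻¹ * y) • V)) :
    Disjoint (x • V) (y • V) := by
  have := (Set.disjoint_smul_set (a := x)).2 h
  rwa [smul_smul, mul_inv_cancel_left] at this

lemma key2 (lam : G → (Lp ℂ 2 μ →L[ℂ] Lp ℂ 2 μ))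
    (hlam : ∀ (g : G) (f : Lp ℂ 2 μ), (lam g f : G → ℂ) =ᵐ[μ] fun t => f (g⁻¹ * t))
    {a b : G} (hab : a ≠ b) : Real.sqrt 2 ≤ ‖lam a - lam b‖ := by
  obtain ⟨V, hVo, hV0, hVfin, hVdisj⟩ := exists_good_V μ {a⁻¹ * b}
  have hd : Disjoint (a • V) (b • V) :=
    disjoint_translates a b (hVdisj _ (Finset.mem_singleton_self _)
      (by simpa [inv_mul_eq_one] using hab))
  have hV : MeasurableSet V := hVo.measurableSet
  have hA : MeasurableSet (a • V) := hV.const_smul a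
  have hB : MeasurableSet (b • V) := hV.const_smul b
  have hμA : μ (a • V) ≠ ∞ := (measure_smul_set μ a V).trans_ne hVfin
  have hμB : μ (b • V) ≠ ∞ := (measure_smul_set μ b V).trans_ne hVfin
  set f := indicatorConstLp 2 hV hVfin (1 : ℂ) with hfdef
  have hTf : (lam a - lam b) f =
      indicatorConstLp 2 hA hμA (1 : ℂ) - indicatorConstLp 2 hB hμB (1 : ℂ) := by
    rw [ContinuousLinearMap.sub_apply, hfdef, lam_indicator_eq μ lam hlam a hV hVfin,
      lam_indicator_eq μ lam hlam b hV hVfin]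
  refine opNorm_ge_sqrt_two _ f (μ V).toReal (ENNReal.toReal_pos hV0.ne' hVfin)
    (norm_sq_indicator μ hV hVfin) ?_
  rw [hTf, norm_sub_sq (𝕜 := ℂ),
    (norm_sq_indicator μ hA hμA).trans (by rw [measure_smul_set]),
    (norm_sq_indicator μ hB hμB).trans (by rw [measure_smul_set]),
    re_inner_indicator_zero μ hA hB hμA hμB hd]
  ring_nf
  linarith

lemma key4 (lam : G → (Lp ℂ 2 μ →L[ℂ] Lp ℂ 2 μ))
    (hlam : ∀ (g : G) (f : Lp ℂ 2 μ), (lam g f : G → ℂ) =ᵐ[μ] fun t => f (g⁻¹ * t))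
    {a b c d : G} (hac : a ≠ c) (had : a ≠ d) (hbc : b ≠ c) (hbd : b ≠ d) :
    Real.sqrt 2 ≤ ‖lam a + lam b - lam c - lam d‖ := by
  classical
  obtain ⟨V, hVo, hV0, hVfin, hVdisj⟩ :=
    exists_good_V μ {a⁻¹ * c, a⁻¹ * d, b⁻¹ * c, b⁻¹ * d}
  have hdac : Disjoint (a • V) (c • V) :=
    disjoint_translates a c (hVdisj _ (by simp) (by simpa [inv_mul_eq_one] using hac))
  have hdad : Disjoint (a • V) (d • V) :=
    disjoint_translates a d (hVdisj _ (by simp) (by simpa [inv_mul_eq_one] using had))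
  have hdbc : Disjoint (b • V) (c • V) :=
    disjoint_translates b c (hVdisj _ (by simp) (by simpa [inv_mul_eq_one] using hbc))
  have hdbd : Disjoint (b • V) (d • V) :=
    disjoint_translates b d (hVdisj _ (by simp) (by simpa [inv_mul_eq_one] using hbd))
  have hV : MeasurableSet V := hVo.measurableSet
  have hA : MeasurableSet (a • V) := hV.const_smul a
  have hB : MeasurableSet (b • V) := hV.const_smul b
  have hC : MeasurableSet (c • V) := hV.const_smul c
  have hD : MeasurableSet (d • V) := hV.const_smul d
  have hμA : μ (a • V) ≠ ∞ := (measure_smul_set μ a V).trans_ne hVfin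
  have hμB : μ (b • V) ≠ ∞ := (measure_smul_set μ b V).trans_ne hVfin
  have hμC : μ (c • V) ≠ ∞ := (measure_smul_set μ c V).trans_ne hVfin
  have hμD : μ (d • V) ≠ ∞ := (measure_smul_set μ d V).trans_ne hVfin
  set f := indicatorConstLp 2 hV hVfin (1 : ℂ) with hfdef
  set uA := indicatorConstLp 2 hA hμA (1 : ℂ) with hAdef
  set uB := indicatorConstLp 2 hB hμB (1 : ℂ) with hBdef
  set uC := indicatorConstLp 2 hC hμC (1 : ℂ) with hCdef
  set uD := indicatorConstLp 2 hD hμD (1 : ℂ) with hDdef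
  have hTf : (lam a + lam b - lam c - lam d) f = (uA + uB) - (uC + uD) := by
    simp only [ContinuousLinearMap.sub_apply, ContinuousLinearMap.add_apply, hfdef,
      lam_indicator_eq μ lam hlam a hV hVfin, lam_indicator_eq μ lam hlam b hV hVfin,
      lam_indicator_eq μ lam hlam c hV hVfin, lam_indicator_eq μ lam hlam d hV hVfin,
      hAdef, hBdef, hCdef, hDdef]
    abel
  refine opNorm_ge_sqrt_two _ f (μ V).toReal (ENNReal.toReal_pos hV0.ne' hVfin)
    (norm_sq_indicator μ hV hVfin) ?_
  have nA : ‖uA‖ ^ 2 = (μ V).toReal :=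
    (norm_sq_indicator μ hA hμA).trans (by rw [measure_smul_set])
  have nB : ‖uB‖ ^ 2 = (μ V).toReal :=
    (norm_sq_indicator μ hB hμB).trans (by rw [measure_smul_set])
  have nC : ‖uC‖ ^ 2 = (μ V).toReal :=
    (norm_sq_indicator μ hC hμC).trans (by rw [measure_smul_set])
  have nD : ‖uD‖ ^ 2 = (μ V).toReal :=
    (norm_sq_indicator μ hD hμD).trans (by rw [measure_smul_set])
  rw [hTf, norm_sub_sq (𝕜 := ℂ), norm_add_sq (𝕜 := ℂ) uA uB, norm_add_sq (𝕜 := ℂ) uC uD,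
    inner_add_left, inner_add_right, inner_add_right, map_add, map_add, map_add,
    re_inner_indicator_zero μ hA hC hμA hμC hdac,
    re_inner_indicator_zero μ hA hD hμA hμD hdad,
    re_inner_indicator_zero μ hB hC hμB hμC hdbc,
    re_inner_indicator_zero μ hB hD hμB hμD hdbd,
    nA, nB, nC, nD]
  have h1 : 0 ≤ RCLike.re (inner (𝕜 := ℂ) uA uB) := re_inner_indicator_nonneg μ hA hB hμA hμB
  have h2 : 0 ≤ RCLike.re (inner (𝕜 := ℂ) uC uD) := re_inner_indicator_nonneg μ hC hD hμC hμD
  have hm0 : (0:ℝ) ≤ (μ V).toReal := ENNReal.toReal_nonneg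
  linarith

end Main2

/-- Gap estimate for combinations `λ_{g₁} + λ_{g₂} - λ_{g₃} - λ_{g₄}` of left translation
operators on `L²(G, μ)` for a left Haar measure `μ` on a locally compact group `G`:
if neither (`g₁ = g₃` and `g₂ = g₄`) nor (`g₁ = g₄` and `g₂ = g₃`), then the norm is at
least `√2`; otherwise the combination vanishes. -/
theorem norm_translation_combination_gap
    {G : Type*} [Group G] [TopologicalSpace G] [IsTopologicalGroup G] [T2Space G]
    [LocallyCompactSpace G] [MeasurableSpace G] [BorelSpace G]
    (μ : Measure G) [μ.IsHaarMeasure] [μ.Regular]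
    (lam : G → (Lp ℂ 2 μ →L[ℂ] Lp ℂ 2 μ))
    (hlam : ∀ (g : G) (f : Lp ℂ 2 μ), (lam g f : G → ℂ) =ᵐ[μ] fun t => f (g⁻¹ * t))
    (g₁ g₂ g₃ g₄ : G) :
    (¬((g₁ = g₃ ∧ g₂ = g₄) ∨ (g₁ = g₄ ∧ g₂ = g₃)) →
        Real.sqrt 2 ≤ ‖lam g₁ + lam g₂ - lam g₃ - lam g₄‖) ∧
      (((g₁ = g₃ ∧ g₂ = g₄) ∨ (g₁ = g₄ ∧ g₂ = g₃)) →
        lam g₁ + lam g₂ - lam g₃ - lam g₄ = 0) := by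
  constructor
  · intro hne
    by_cases h13 : g₁ = g₃
    · subst h13
      have h24 : g₂ ≠ g₄ := fun h => hne (Or.inl ⟨rfl, h⟩)
      have : lam g₁ + lam g₂ - lam g₁ - lam g₄ = lam g₂ - lam g₄ := by abel
      rw [this]
      exact key2 μ lam hlam h24
    by_cases h14 : g₁ = g₄
    · subst h14
      have h23 : g₂ ≠ g₃ := fun h => hne (Or.inr ⟨rfl, h⟩)
      have : lam g₁ + lam g₂ - lam g₃ - lam g₁ = lam g₂ - lam g₃ := by abel
      rw [this]
      exact key2 μ lam hlam h23
    by_cases h23 : g₂ = g₃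
    · subst h23
      have : lam g₁ + lam g₂ - lam g₂ - lam g₄ = lam g₁ - lam g₄ := by abel
      rw [this]
      exact key2 μ lam hlam h14
    by_cases h24 : g₂ = g₄
    · subst h24
      have : lam g₁ + lam g₂ - lam g₃ - lam g₂ = lam g₁ - lam g₃ := by abel
      rw [this]
      exact key2 μ lam hlam h13
    · exact key4 μ lam hlam h13 h14 h23 h24
  · rintro (⟨rfl, rfl⟩ | ⟨rfl, rfl⟩) <;> abel
end

section
/- For a = (a₀, a₁, a₂, a₃, a₄, a₅) ∈ ℂ⁶ define N(a) = |a₀| + |a₃| + √(|a₁ + a₄|² + |a₁ − a₄|² + |a₂ + a₅|² + |a₂ − a₅|² + 4·|a₁a₂ + a₄a₅|). Then both constants √2 in the inequality (1/√2)·Σⱼ|aⱼ| ≤ N(a) ≤ √2·Σⱼ|aⱼ| are attained: for a = (0, 1, 1, 0, 1, −1) one has Σⱼ|aⱼ| = 4 and N(a) = 2√2, and for a' = (0, 1, 0, 0, 0, 0) one has Σⱼ|a'ⱼ| = 1 and N(a') = √2. -/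
/-- The norm in `A(S₃)` of a function on `S₃ ≃ ℤ₆` (as a set) expressed through its Fourier
coefficients `a₀, …, a₅` with respect to the characters of `ℤ₆`:
`N(a) = |a₀| + |a₃| + ‖2π(f)‖₁` where the trace norm term is computed via
`‖x‖₁ = √(‖x‖₂² + 2|det x|)`. -/
noncomputable def fourierNormS3 (a : Fin 6 → ℂ) : ℝ :=
  ‖(a 0)‖ + ‖(a 3)‖ +
    Real.sqrt ((‖(a 1 + a 4)‖) ^ 2 + (‖(a 1 - a 4)‖) ^ 2 +
      (‖(a 2 + a 5)‖) ^ 2 + (‖(a 2 - a 5)‖) ^ 2 +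
      4 * ‖(a 1 * a 2 + a 4 * a 5)‖)

/-- Both constants `√2` in `(1/√2)·Σ|aⱼ| ≤ N(a) ≤ √2·Σ|aⱼ|` are attained: for
`a = (0, 1, 1, 0, 1, −1)` one has `Σ|aⱼ| = 4` and `N(a) = 2√2`, and for
`a' = (0, 1, 0, 0, 0, 0)` one has `Σ|a'ⱼ| = 1` and `N(a') = √2`. -/
theorem fourierNormS3_bounds_attained :
    (∑ j, ‖((![0, 1, 1, 0, 1, -1] : Fin 6 → ℂ) j)‖ = 4 ∧
      fourierNormS3 ![0, 1, 1, 0, 1, -1] = 2 * Real.sqrt 2) ∧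
    (∑ j, ‖((![0, 1, 0, 0, 0, 0] : Fin 6 → ℂ) j)‖ = 1 ∧
      fourierNormS3 ![0, 1, 0, 0, 0, 0] = Real.sqrt 2) := by
  refine ⟨⟨?_, ?_⟩, ⟨?_, ?_⟩⟩
  · have h5 : (![0,1,1,0,1,-1] : Fin 6 → ℂ) 5 = -1 := rfl
    simp [Fin.sum_univ_six, h5]
    norm_num
  · show ‖(0:ℂ)‖ + ‖(0:ℂ)‖ +
      Real.sqrt ((‖((1:ℂ) + 1)‖) ^ 2 + (‖((1:ℂ) - 1)‖) ^ 2 +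
        (‖((1:ℂ) + -1)‖) ^ 2 + (‖((1:ℂ) - -1)‖) ^ 2 +
        4 * ‖((1:ℂ) * 1 + 1 * -1)‖) = 2 * Real.sqrt 2
    norm_num
    rw [show (8:ℝ) = 2^2*2 by norm_num, Real.sqrt_mul (by positivity),
      Real.sqrt_sq (by norm_num)]
  · have h5 : (![0,1,0,0,0,0] : Fin 6 → ℂ) 5 = 0 := rfl
    simp [Fin.sum_univ_six, h5]
  · show ‖(0:ℂ)‖ + ‖(0:ℂ)‖ +
      Real.sqrt ((‖((1:ℂ) + 0)‖) ^ 2 + (‖((1:ℂ) - 0)‖) ^ 2 +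
        (‖((0:ℂ) + 0)‖) ^ 2 + (‖((0:ℂ) - 0)‖) ^ 2 +
        4 * ‖((1:ℂ) * 0 + 0 * 0)‖) = Real.sqrt 2
    norm_num
end

section
/- Let x be a 2×2 complex matrix, and let p = xᴴ x (where xᴴ is the conjugate transpose), which is positive semidefinite. Then the trace of the positive semidefinite square root of p is a nonnegative real number equal to √( Re(trace(xᴴ x)) + 2·|det x| ). Equivalently, the trace norm ‖x‖₁ (the sum of the singular values of x) satisfies ‖x‖₁ = √( ‖x‖₂² + 2·|det x| ), where ‖x‖₂² = Σ_{i,j} |x_{ij}|². -/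
open Matrix ComplexOrder

/-- The positive semidefinite square root, as defined in Mathlib (Dec 2024). -/
noncomputable def Matrix.PosSemidef.sqrt {n : Type*} [Fintype n] [DecidableEq n] {𝕜 : Type*}
    [RCLike 𝕜] {A : Matrix n n 𝕜} (hA : A.PosSemidef) : Matrix n n 𝕜 :=
  hA.1.eigenvectorUnitary.1 * diagonal ((↑) ∘ (Real.sqrt ∘ hA.1.eigenvalues)) *
    (star hA.1.eigenvectorUnitary : Matrix n n 𝕜)

lemma Matrix.PosSemidef.posSemidef_sqrt {n : Type*} [Fintype n] [DecidableEq n] {𝕜 : Type*}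
    [RCLike 𝕜] {A : Matrix n n 𝕜} (hA : A.PosSemidef) : hA.sqrt.PosSemidef := by
  unfold Matrix.PosSemidef.sqrt
  have hD : (diagonal ((↑) ∘ (Real.sqrt ∘ hA.1.eigenvalues)) : Matrix n n 𝕜).PosSemidef :=
    posSemidef_diagonal_iff.mpr fun i => RCLike.ofReal_nonneg.mpr (Real.sqrt_nonneg _)
  have := hD.mul_mul_conjTranspose_same (hA.1.eigenvectorUnitary : Matrix n n 𝕜)
  rwa [← star_eq_conjTranspose] at this

lemma Matrix.PosSemidef.sqrt_mul_self {n : Type*} [Fintype n] [DecidableEq n] {𝕜 : Type*}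
    [RCLike 𝕜] {A : Matrix n n 𝕜} (hA : A.PosSemidef) : hA.sqrt * hA.sqrt = A := by
  have hU : (star hA.1.eigenvectorUnitary : Matrix n n 𝕜) * (hA.1.eigenvectorUnitary : Matrix n n 𝕜) = 1 :=
    Unitary.coe_star_mul_self _
  have hD : (diagonal ((↑) ∘ (Real.sqrt ∘ hA.1.eigenvalues)) : Matrix n n 𝕜) *
      diagonal ((↑) ∘ (Real.sqrt ∘ hA.1.eigenvalues)) =
      diagonal (RCLike.ofReal ∘ hA.1.eigenvalues) := by
    rw [diagonal_mul_diagonal]; congr 1; funext i; simp only [Function.comp_apply]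
    rw [← RCLike.ofReal_mul, Real.mul_self_sqrt (hA.eigenvalues_nonneg i)]
  unfold Matrix.PosSemidef.sqrt
  conv_rhs => rw [hA.1.spectral_theorem, Unitary.conjStarAlgAut_apply]
  rw [show ∀ a b c : Matrix n n 𝕜, a * b * c * (a * b * c) = a * (b * (c * a) * b) * c from
    fun a b c => by simp only [mul_assoc], hU, mul_one, hD]

lemma aux_trace_sq (q : Matrix (Fin 2) (Fin 2) ℂ) :
    q.trace ^ 2 = (q * q).trace + 2 * q.det := by
  simp [Matrix.trace_fin_two, Matrix.det_fin_two, Matrix.mul_apply, Fin.sum_univ_two]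
  ring

lemma aux_diag_nonneg {n : ℕ} {q : Matrix (Fin n) (Fin n) ℂ} (h : q.PosSemidef) (i : Fin n) :
    0 ≤ q i i := by
  exact h.diag_nonneg

/-- For a 2×2 complex matrix `x`, the trace of the positive semidefinite square root of
`xᴴ x` equals the nonnegative real number `√(Re(tr(xᴴ x)) + 2|det x|)`; equivalently,
the trace norm of `x` equals `√(‖x‖₂² + 2|det x|)` with `‖x‖₂` the Frobenius norm. -/
theorem trace_sqrt_conjTranspose_mul_self (x : Matrix (Fin 2) (Fin 2) ℂ)
    (hp : (xᴴ * x).PosSemidef) :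
    hp.sqrt.trace = (Real.sqrt ((xᴴ * x).trace.re + 2 * ‖x.det‖) : ℂ) ∧
      hp.sqrt.trace =
        (Real.sqrt ((∑ i, ∑ j, ‖x i j‖ ^ 2) + 2 * ‖x.det‖) : ℂ) := by
  set q := hp.sqrt with hqdef
  have hqps : q.PosSemidef := hp.posSemidef_sqrt
  have hsq : q * q = xᴴ * x := hp.sqrt_mul_self
  -- determinant of q is a nonneg real
  set d : ℝ := ∏ i, hqps.1.eigenvalues i with hd
  have hdet_prod : q.det = (d : ℂ) := by
    rw [hqps.1.det_eq_prod_eigenvalues, hd, Complex.ofReal_prod]; rfl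
  have hd_nonneg : 0 ≤ d :=
    Finset.prod_nonneg fun i _ => hqps.eigenvalues_nonneg i
  have hdet_sq : (d : ℂ) ^ 2 = ((‖x.det‖ : ℝ) : ℂ) ^ 2 := by
    rw [← hdet_prod, sq, ← Matrix.det_mul, hsq, Matrix.det_mul, Matrix.det_conjTranspose]
    rw [mul_comm, Complex.star_def, Complex.mul_conj]
    norm_cast
    exact (Complex.sq_norm _).symm
  have hd_eq : d = ‖x.det‖ := by
    have h2 : d ^ 2 = (‖x.det‖) ^ 2 := by
      exact_mod_cast hdet_sq
    calc d = Real.sqrt (d ^ 2) := (Real.sqrt_sq hd_nonneg).symm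
    _ = Real.sqrt ((‖x.det‖) ^ 2) := by rw [h2]
    _ = ‖x.det‖ := Real.sqrt_sq (norm_nonneg _)
  -- trace of q is a nonneg real
  have htr_nonneg : 0 ≤ q.trace := by
    rw [Matrix.trace_fin_two]
    exact add_nonneg (aux_diag_nonneg hqps 0) (aux_diag_nonneg hqps 1)
  have htr_re : q.trace = ((q.trace.re : ℝ) : ℂ) := by
    have h := Matrix.trace_conjTranspose q
    rw [hqps.1] at h
    exact (Complex.conj_eq_iff_re.mp h.symm).symm
  set r : ℝ := q.trace.re with hr
  have hr_nonneg : 0 ≤ r := by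
    rw [Complex.le_def] at htr_nonneg
    simpa using htr_nonneg.1
  -- key identity
  have hkey : ((r : ℝ) : ℂ) ^ 2 = (xᴴ * x).trace + 2 * ((‖x.det‖ : ℝ) : ℂ) := by
    rw [← htr_re, aux_trace_sq, hsq, hdet_prod, hd_eq]
  have hkeyre : r ^ 2 = (xᴴ * x).trace.re + 2 * ‖x.det‖ := by
    have := congrArg Complex.re hkey
    simpa [← Complex.ofReal_pow] using this
  have h1 : q.trace = (Real.sqrt ((xᴴ * x).trace.re + 2 * ‖x.det‖) : ℂ) := by
    rw [htr_re, ← hkeyre, Real.sqrt_sq hr_nonneg]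
  refine ⟨h1, ?_⟩
  have htr2 : (xᴴ * x).trace.re = ∑ i, ∑ j, ‖x i j‖ ^ 2 := by
    simp [Matrix.trace, Matrix.diag, Matrix.mul_apply, Matrix.conjTranspose_apply,
      Fin.sum_univ_two, Complex.mul_re, Complex.sq_norm, Complex.normSq_apply]
    ring
  rw [h1, htr2]
end
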